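/- arXiv:math/0501186 — 2 statements merged into one kernel-verified Lean document; each statement's English description precedes it below -/
import Mathlib

section
/- For all natural numbers k and l: Σ_{j=0}^{l} (-1)^j q^{j(j+1)/2 - l(k+j+1)} / ((q;q)_j · (q;q)_{l-j} · (1-q^{k+j+1})) = 1 / (q^{k+1}; q)_{l+1}. -/
open Finset

/-- The q-Pochhammer symbol `(a;q)_n = ∏_{j=0}^{n-1} (1 - a q^j)`. -/
def qPoch {F : Type*} [Field F] (q a : F) (n : ℕ) : F :=
  ∏ j ∈ Finset.range n, (1 - a * q ^ j)

/-- The q-binomial coefficient `[n choose i]_q`, equal to 0 when `i > n`. -/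
def qBinom {F : Type*} [Field F] (q : F) (n i : ℕ) : F :=
  if i ≤ n then qPoch q q n / (qPoch q q i * qPoch q q (n - i)) else 0

/-- The q-integer `[n]_q = (1-q^n)/(1-q)`. -/
def qInt {F : Type*} [Field F] (q : F) (n : ℕ) : F := (1 - q ^ n) / (1 - q)

/-- The q-dual sequence `a*_n = ∑_{i=0}^n (-1)^i [n choose i]_q q^{i(i-1)/2} a_i`. -/
def qDual {F : Type*} [Field F] (q : F) (a : ℕ → F) (n : ℕ) : F :=
  ∑ i ∈ Finset.range (n + 1), (-1 : F) ^ i * qBinom q n i * q ^ (i.choose 2) * a i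

/-! The sum is `x ^ (-l)` times the partial fraction expansion of `x ^ l / (x; q)_{l+1}` at
`x = q ^ (k + 1)`; the coefficient of `1 / (1 - x q ^ j)` is the residue
`(-1) ^ j q ^ (C(j+1, 2) - l j) / ((q; q)_j (q; q)_{l-j})`. Both sides of the expansion satisfy
`(1 - q ^ (l+1)) R_{l+1}(x) = x R_l(x) - x q R_l(x q)`. For the right side this is
`(x; q)_{l+2} = (x; q)_{l+1} (1 - x q ^ (l+1)) = (1 - x) (x q; q)_{l+1}`. For the left side, split
`1 - q ^ (l+1) = (1 - q ^ (l+1-j)) + q ^ (l+1-j) (1 - q ^ j)` (a q-Pascal rule for the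
coefficients) and sum by parts, using
`1 / (1 - a) - 1 / (1 - a q) = q ^ (-j) (x / (1 - a) - x q / (1 - a q))` for `a = x q ^ j`. -/

section

variable {F : Type*} [Field F] {q : F}

lemma one_sub_pow_ne_zero (hq : ∀ m : ℕ, 0 < m → q ^ m ≠ 1) {m : ℕ} (hm : 0 < m) :
    1 - q ^ m ≠ 0 :=
  sub_ne_zero.mpr (hq m hm).symm

lemma zpow_eq_zpow_mul_pow (hq0 : q ≠ 0) {a b : ℤ} {n : ℕ} (h : a = b + n) :
    q ^ a = q ^ b * q ^ n := by
  rw [h, zpow_add₀ hq0, zpow_natCast]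

lemma qPoch_succ (q a : F) (n : ℕ) : qPoch q a (n + 1) = qPoch q a n * (1 - a * q ^ n) :=
  prod_range_succ _ _

lemma qPoch_succ' (q a : F) (n : ℕ) : qPoch q a (n + 1) = (1 - a) * qPoch q (a * q) n := by
  rw [qPoch, qPoch, prod_range_succ', pow_zero, mul_one, mul_comm]
  exact congrArg _ (prod_congr rfl fun j _ => by ring)

lemma qPoch_self_succ (q : F) (n : ℕ) : qPoch q q (n + 1) = qPoch q q n * (1 - q ^ (n + 1)) := by
  rw [qPoch_succ, pow_succ']

lemma one_sub_mul_pow_ne_zero {a : F} {n j : ℕ} (h : qPoch q a n ≠ 0) (hj : j < n) :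
    1 - a * q ^ j ≠ 0 :=
  prod_ne_zero_iff.mp h j (mem_range.mpr hj)

lemma qPoch_self_ne_zero (hq : ∀ m : ℕ, 0 < m → q ^ m ≠ 1) (n : ℕ) : qPoch q q n ≠ 0 :=
  prod_ne_zero_iff.mpr fun j _ => by
    simpa only [pow_succ'] using one_sub_pow_ne_zero hq j.succ_pos

def partialFractionCoeff (q : F) (l j : ℕ) : F :=
  (-1) ^ j * q ^ (((j + 1).choose 2 : ℤ) - l * j) / (qPoch q q j * qPoch q q (l - j))

lemma pow_mul_one_sub_pow_mul_partialFractionCoeff_succ (hq0 : q ≠ 0)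
    (hq : ∀ m : ℕ, 0 < m → q ^ m ≠ 1) {l j : ℕ} (hj : j ≤ l) :
    q ^ j * (1 - q ^ (l + 1 - j)) * partialFractionCoeff q (l + 1) j =
      partialFractionCoeff q l j := by
  obtain ⟨d, rfl⟩ := Nat.exists_eq_add_of_le hj
  rw [partialFractionCoeff, partialFractionCoeff, show j + d + 1 - j = d + 1 by omega,
    show j + d - j = d by omega, qPoch_self_succ,
    zpow_eq_zpow_mul_pow hq0 (a := ((j + 1).choose 2 : ℤ) - ((j + d : ℕ) : ℤ) * j)
      (b := ((j + 1).choose 2 : ℤ) - ((j + d + 1 : ℕ) : ℤ) * j) (n := j)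
      (by push_cast; ring)]
  have hPj := qPoch_self_ne_zero hq j
  have hPd := qPoch_self_ne_zero hq d
  have hd := one_sub_pow_ne_zero hq (m := d + 1) d.succ_pos
  field_simp

lemma partialFractionCoeff_succ_right (hq0 : q ≠ 0)
    (hq : ∀ m : ℕ, 0 < m → q ^ m ≠ 1) {l j : ℕ} (hj : j ≤ l) :
    q ^ (l - j) * (1 - q ^ (j + 1)) * partialFractionCoeff q (l + 1) (j + 1) =
      -((1 - q ^ (l + 1 - j)) * partialFractionCoeff q (l + 1) j) := by
  obtain ⟨d, rfl⟩ := Nat.exists_eq_add_of_le hj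
  rw [partialFractionCoeff, partialFractionCoeff, show j + d + 1 - j = d + 1 by omega,
    show j + d - j = d by omega, show j + d + 1 - (j + 1) = d by omega, qPoch_self_succ,
    qPoch_self_succ,
    zpow_eq_zpow_mul_pow hq0 (a := ((j + 1).choose 2 : ℤ) - ((j + d + 1 : ℕ) : ℤ) * j)
      (b := ((j + 1 + 1).choose 2 : ℤ) - ((j + d + 1 : ℕ) : ℤ) * ((j + 1 : ℕ) : ℤ)) (n := d)
      (by rw [Nat.choose_succ_succ (j + 1), Nat.choose_one_right]; push_cast; ring)]
  have hPj := qPoch_self_ne_zero hq j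
  have hPd := qPoch_self_ne_zero hq d
  have hd := one_sub_pow_ne_zero hq (m := d + 1) d.succ_pos
  have hj1 := one_sub_pow_ne_zero hq (m := j + 1) j.succ_pos
  field_simp
  ring

lemma sum_partialFractionCoeff_succ_div (hq0 : q ≠ 0) (hq : ∀ m : ℕ, 0 < m → q ^ m ≠ 1)
    (l : ℕ) {x : F} (hx : qPoch q x (l + 2) ≠ 0) :
    (1 - q ^ (l + 1)) *
        ∑ j ∈ range (l + 2), partialFractionCoeff q (l + 1) j / (1 - x * q ^ j) =
      x * ∑ j ∈ range (l + 1), partialFractionCoeff q l j / (1 - x * q ^ j) -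
        x * q * ∑ j ∈ range (l + 1), partialFractionCoeff q l j / (1 - x * q * q ^ j) := by
  set c := partialFractionCoeff q (l + 1)
  calc (1 - q ^ (l + 1)) * ∑ j ∈ range (l + 2), c j / (1 - x * q ^ j)
      = ∑ j ∈ range (l + 2), (1 - q ^ (l + 1 - j)) * c j / (1 - x * q ^ j) +
          ∑ j ∈ range (l + 2), q ^ (l + 1 - j) * (1 - q ^ j) * c j / (1 - x * q ^ j) := by
        rw [mul_sum, ← sum_add_distrib]
        refine sum_congr rfl fun j hj => ?_
        rw [← Nat.sub_add_cancel (Nat.lt_succ_iff.mp (mem_range.mp hj)), pow_add,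
          Nat.add_sub_cancel]
        ring
    _ = ∑ j ∈ range (l + 1), (1 - q ^ (l + 1 - j)) * c j / (1 - x * q ^ j) +
          ∑ j ∈ range (l + 1), q ^ (l - j) * (1 - q ^ (j + 1)) * c (j + 1) /
            (1 - x * q ^ (j + 1)) := by
        rw [sum_range_succ, sum_range_succ' _ (l + 1)]
        simp
    _ = ∑ j ∈ range (l + 1), (1 - q ^ (l + 1 - j)) * c j *
          (1 / (1 - x * q ^ j) - 1 / (1 - x * q ^ (j + 1))) := by
        rw [← sum_add_distrib]
        refine sum_congr rfl fun j hj => ?_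
        rw [partialFractionCoeff_succ_right hq0 hq (Nat.lt_succ_iff.mp (mem_range.mp hj))]
        ring
    _ = ∑ j ∈ range (l + 1), partialFractionCoeff q l j *
          (x / (1 - x * q ^ j) - x * q / (1 - x * q * q ^ j)) := by
        refine sum_congr rfl fun j hj => ?_
        have hjl := Nat.lt_succ_iff.mp (mem_range.mp hj)
        rw [← pow_mul_one_sub_pow_mul_partialFractionCoeff_succ hq0 hq hjl]
        have hj := one_sub_mul_pow_ne_zero hx (j := j) (by omega)
        have hj' := one_sub_mul_pow_ne_zero hx (j := j + 1) (by omega)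
        rw [mul_assoc x q, ← pow_succ']
        field_simp
        ring
    _ = _ := by
        simp only [mul_sum, ← sum_sub_distrib]
        exact sum_congr rfl fun j _ => by ring

lemma one_sub_pow_mul_pow_div_qPoch_succ (l : ℕ) {x : F} (hx : qPoch q x (l + 2) ≠ 0) :
    (1 - q ^ (l + 1)) * (x ^ (l + 1) / qPoch q x (l + 2)) =
      x * (x ^ l / qPoch q x (l + 1)) - x * q * ((x * q) ^ l / qPoch q (x * q) (l + 1)) := by
  have hleft : qPoch q x (l + 2) = _ := qPoch_succ q x (l + 1)
  have hright : qPoch q x (l + 2) = _ := qPoch_succ' q x (l + 1)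
  have hA : qPoch q x (l + 1) ≠ 0 := left_ne_zero_of_mul (hleft ▸ hx)
  have hB : qPoch q (x * q) (l + 1) ≠ 0 := right_ne_zero_of_mul (hright ▸ hx)
  field_simp
  linear_combination (-x ^ (l + 1) * qPoch q (x * q) (l + 1)) * hleft +
    (x ^ (l + 1) * q ^ (l + 1) * qPoch q x (l + 1)) * hright

theorem sum_partialFractionCoeff_div (hq0 : q ≠ 0) (hq : ∀ m : ℕ, 0 < m → q ^ m ≠ 1)
    (l : ℕ) {x : F} (hx : qPoch q x (l + 1) ≠ 0) :
    ∑ j ∈ range (l + 1), partialFractionCoeff q l j / (1 - x * q ^ j) =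
      x ^ l / qPoch q x (l + 1) := by
  induction l generalizing x with
  | zero => simp [partialFractionCoeff, qPoch]
  | succ l ih =>
    have hleft : qPoch q x (l + 1) ≠ 0 := left_ne_zero_of_mul (qPoch_succ q x (l + 1) ▸ hx)
    have hright : qPoch q (x * q) (l + 1) ≠ 0 :=
      right_ne_zero_of_mul (qPoch_succ' q x (l + 1) ▸ hx)
    refine mul_left_cancel₀ (one_sub_pow_ne_zero hq l.succ_pos) ?_
    rw [sum_partialFractionCoeff_succ_div hq0 hq l hx, ih hleft, ih hright,
      one_sub_pow_mul_pow_div_qPoch_succ l hx]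

end

theorem stmt13 {F : Type*} [Field F] (q : F) (hq0 : q ≠ 0)
    (hq : ∀ m : ℕ, 0 < m → q ^ m ≠ 1) (k l : ℕ) :
    ∑ j ∈ Finset.range (l + 1), (-1 : F) ^ j *
        q ^ (((j + 1).choose 2 : ℤ) - (l : ℤ) * ((k : ℤ) + j + 1)) /
        (qPoch q q j * qPoch q q (l - j) * (1 - q ^ (k + j + 1))) =
    1 / qPoch q (q ^ (k + 1)) (l + 1) := by
  have hx : qPoch q (q ^ (k + 1)) (l + 1) ≠ 0 := prod_ne_zero_iff.mpr fun j _ => by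
    simpa only [← pow_add, add_right_comm k 1 j] using one_sub_pow_ne_zero hq (k + j).succ_pos
  calc _ = ((q ^ (k + 1)) ^ l)⁻¹ *
        ∑ j ∈ range (l + 1), partialFractionCoeff q l j / (1 - q ^ (k + 1) * q ^ j) := by
        rw [mul_sum]
        refine sum_congr rfl fun j _ => ?_
        rw [partialFractionCoeff, ← pow_add, add_right_comm k 1 j, ← pow_mul,
          zpow_eq_zpow_mul_pow hq0 (a := ((j + 1).choose 2 : ℤ) - (l : ℤ) * j)
            (b := ((j + 1).choose 2 : ℤ) - (l : ℤ) * ((k : ℤ) + j + 1))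
            (n := (k + 1) * l) (by push_cast; ring)]
        field_simp
    _ = _ := by rw [sum_partialFractionCoeff_div hq0 hq l hx]; field_simp
end

section
/- For all natural numbers m, k, l: (1/[l]_q!) Σ_{j=0}^{l} (-1)^{l-j} q^{j(j+1)/2 - l(k+j)} [l choose j]_q [k+j]_q^m = Σ_{j=0}^{k} q^{j(j-1)/2} [l+j choose j]_q ([k]_q! / [k-j]_q!) S_q(m, l+j), i.e. the non-central q-Stirling number of the second kind with non-centrality parameter k equals the stated combination of ordinary q-Stirling numbers of the second kind. -/
/-!
Write `Δ_q^n f(k)` for the `n`-th q-difference `(E - 1)(E - q)⋯(E - q^(n-1)) f` at `k`, `E` the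
shift. With `f p = [p]_q^m`, Carlitz's number is `S_q(m, n) = q^(-C(n,2)) Δ_q^n f(0) / [n]_q!`, and
reversing the summation turns the left side into `q^(-C(l,2) - lk) Δ_q^l f(k) / [l]_q!`. Since
`Δ_q^(l+t) = Δ_q^l (E - q^l)⋯(E - q^(l+t-1))`, the function `g p = q^(-lp) Δ_q^l f(p)` has
`Δ_q^t g(0) = q^(-lt) Δ_q^(l+t) f(0)`, and the q-Newton interpolation formula
`g(k) = ∑_t [k choose t]_q Δ_q^t g(0)` is then exactly the identity.
-/

open Finset

/-- The q-factorial `[n]_q! = ∏_{j=1}^n [j]_q`. -/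
def qFact {F : Type*} [Field F] (q : F) (n : ℕ) : F :=
  ∏ j ∈ Finset.range n, qInt q (j + 1)

/-- Carlitz's q-Stirling number of the second kind
`S_q(m,n) = (q^{-n(n-1)/2}/[n]_q!) ∑_{i=0}^n (-1)^i q^{i(i-1)/2} [n choose i]_q [n-i]_q^m`. -/
def qStirling2 {F : Type*} [Field F] (q : F) (m n : ℕ) : F :=
  (q ^ (-(n.choose 2 : ℤ)) / qFact q n) *
    ∑ i ∈ Finset.range (n + 1), (-1 : F) ^ i * q ^ (i.choose 2) * qBinom q n i *
      (qInt q (n - i)) ^ m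

section

variable {F : Type*} [Field F] {q : F}

theorem qInt_add (a b : ℕ) : qInt q (a + b) = qInt q a + q ^ a * qInt q b := by
  simp only [qInt, pow_add]
  ring

theorem one_sub_ne_zero_of_pow_ne_one (hq : ∀ m : ℕ, 0 < m → q ^ m ≠ 1) : 1 - q ≠ 0 :=
  sub_ne_zero.2 (by simpa using (hq 1 one_pos).symm)

theorem qInt_ne_zero (hq : ∀ m : ℕ, 0 < m → q ^ m ≠ 1) {n : ℕ} (hn : 0 < n) :
    qInt q n ≠ 0 :=
  div_ne_zero (sub_ne_zero.2 (hq n hn).symm) (one_sub_ne_zero_of_pow_ne_one hq)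

theorem qFact_zero : qFact q 0 = 1 :=
  prod_range_zero _

theorem qFact_succ (n : ℕ) : qFact q (n + 1) = qFact q n * qInt q (n + 1) :=
  prod_range_succ _ _

theorem qFact_ne_zero (hq : ∀ m : ℕ, 0 < m → q ^ m ≠ 1) (n : ℕ) : qFact q n ≠ 0 :=
  prod_ne_zero_iff.2 fun j _ => qInt_ne_zero hq j.succ_pos

theorem qPoch_self (n : ℕ) : qPoch q q n = (1 - q) ^ n * qFact q n := by
  rcases eq_or_ne q 1 with rfl | hq1
  · cases n <;> simp [qPoch, qFact]
  · have hpow : (1 - q) ^ n = ∏ _j ∈ range n, (1 - q) := by simp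
    rw [qPoch, qFact, hpow, ← prod_mul_distrib]
    refine prod_congr rfl fun j _ => ?_
    rw [qInt, mul_div_cancel₀ _ (sub_ne_zero.2 hq1.symm), pow_succ']

theorem qBinom_eq_qFact (hq : ∀ m : ℕ, 0 < m → q ^ m ≠ 1) {n i : ℕ} (h : i ≤ n) :
    qBinom q n i = qFact q n / (qFact q i * qFact q (n - i)) := by
  rw [qBinom, if_pos h, qPoch_self, qPoch_self, qPoch_self, mul_mul_mul_comm, ← pow_add,
    Nat.add_sub_cancel' h, mul_div_mul_left _ _ (pow_ne_zero n (one_sub_ne_zero_of_pow_ne_one hq))]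

theorem qBinom_of_lt {n i : ℕ} (h : n < i) : qBinom q n i = 0 :=
  if_neg h.not_ge

theorem qBinom_zero_right (hq : ∀ m : ℕ, 0 < m → q ^ m ≠ 1) (n : ℕ) :
    qBinom q n 0 = 1 := by
  rw [qBinom_eq_qFact hq n.zero_le, Nat.sub_zero, qFact_zero, one_mul,
    div_self (qFact_ne_zero hq n)]

theorem qBinom_symm (hq : ∀ m : ℕ, 0 < m → q ^ m ≠ 1) {n i : ℕ} (h : i ≤ n) :
    qBinom q n (n - i) = qBinom q n i := by
  rw [qBinom_eq_qFact hq (n.sub_le i), qBinom_eq_qFact hq h, Nat.sub_sub_self h, mul_comm]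

theorem qBinom_self (hq : ∀ m : ℕ, 0 < m → q ^ m ≠ 1) (n : ℕ) : qBinom q n n = 1 := by
  rw [qBinom_eq_qFact hq le_rfl, Nat.sub_self, qFact_zero, mul_one, div_self (qFact_ne_zero hq n)]

theorem qBinom_succ_succ (hq : ∀ m : ℕ, 0 < m → q ^ m ≠ 1) (n i : ℕ) :
    qBinom q (n + 1) (i + 1) = qBinom q n (i + 1) + q ^ (n - i) * qBinom q n i := by
  rcases lt_trichotomy i n with h | rfl | h
  · obtain ⟨s, rfl⟩ := Nat.exists_eq_add_of_lt h
    have hs : i + s + 1 - i = s + 1 := by omega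
    have hs' : i + s + 1 - (i + 1) = s := by omega
    rw [qBinom_eq_qFact hq (by omega), qBinom_eq_qFact hq (by omega),
      qBinom_eq_qFact hq h.le, Nat.add_sub_add_right, hs, hs', qFact_succ (i + s + 1),
      qFact_succ i, qFact_succ s, add_right_comm i s 1, add_assoc (i + 1) s 1,
      add_comm (i + 1) (s + 1), qInt_add]
    have := qInt_ne_zero hq i.succ_pos
    have := qInt_ne_zero hq s.succ_pos
    field_simp [qFact_ne_zero hq]
  · rw [qBinom_self hq, qBinom_self hq, qBinom_of_lt (Nat.lt_succ_self i), Nat.sub_self]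
    ring
  · rw [qBinom_of_lt h, qBinom_of_lt (by omega), qBinom_of_lt (by omega)]
    ring

theorem qBinom_succ_succ' (hq : ∀ m : ℕ, 0 < m → q ^ m ≠ 1) (n i : ℕ) :
    qBinom q (n + 1) (i + 1) = q ^ (i + 1) * qBinom q n (i + 1) + qBinom q n i := by
  rcases lt_trichotomy i n with h | rfl | h
  · obtain ⟨s, rfl⟩ := Nat.exists_eq_add_of_lt h
    have hs : i + s + 1 - i = s + 1 := by omega
    have hs' : i + s + 1 - (i + 1) = s := by omega
    rw [qBinom_eq_qFact hq (by omega), qBinom_eq_qFact hq (by omega),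
      qBinom_eq_qFact hq h.le, Nat.add_sub_add_right, hs, hs', qFact_succ (i + s + 1),
      qFact_succ i, qFact_succ s, add_right_comm i s 1, add_assoc (i + 1) s 1, qInt_add]
    have := qInt_ne_zero hq i.succ_pos
    have := qInt_ne_zero hq s.succ_pos
    field_simp [qFact_ne_zero hq]
    ring
  · rw [qBinom_self hq, qBinom_self hq, qBinom_of_lt (Nat.lt_succ_self i)]
    ring
  · rw [qBinom_of_lt h, qBinom_of_lt (by omega), qBinom_of_lt (by omega)]
    ring

/-- The `l`-th q-difference `(Δ_q^l f)(k)`, where `Δ_q^l = (E - 1)(E - q)⋯(E - q^(l-1))` for the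
shift `E f = f ∘ succ`; expanding the product is the q-binomial theorem. -/
def qDiff (q : F) (l : ℕ) (f : ℕ → F) (k : ℕ) : F :=
  ∑ j ∈ range (l + 1), (-1) ^ j * q ^ j.choose 2 * qBinom q l j * f (k + (l - j))

theorem qDiff_zero (hq : ∀ m : ℕ, 0 < m → q ^ m ≠ 1) (f : ℕ → F) (k : ℕ) :
    qDiff q 0 f k = f k := by
  simp [qDiff, qBinom_zero_right hq]

theorem qDiff_succ (hq : ∀ m : ℕ, 0 < m → q ^ m ≠ 1) (l : ℕ) (f : ℕ → F) (k : ℕ) :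
    qDiff q (l + 1) f k = qDiff q l f (k + 1) - q ^ l * qDiff q l f k := by
  have hshift : qDiff q l f (k + 1) =
      ∑ j ∈ range (l + 2), (-1) ^ j * q ^ j.choose 2 * qBinom q l j * f (k + (l + 1 - j)) := by
    rw [sum_range_succ, qBinom_of_lt (Nat.lt_succ_self l), mul_zero, zero_mul, add_zero]
    refine sum_congr rfl fun j hj => ?_
    rw [show k + 1 + (l - j) = k + (l + 1 - j) by grind]
  rw [qDiff, hshift, qDiff, mul_sum, sum_range_succ', sum_range_succ' _ (l + 1), add_sub_right_comm,
    ← sum_sub_distrib]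
  congr 1
  · refine sum_congr rfl fun j hj => ?_
    rw [qBinom_succ_succ hq, Nat.choose_succ_succ', Nat.choose_one_right, Nat.add_sub_add_right]
    have hpow : q ^ l = q ^ j * q ^ (l - j) := by
      rw [← pow_add, Nat.add_sub_cancel' (by simpa [Nat.lt_succ_iff] using hj)]
    rw [hpow, pow_add]
    ring
  · simp [qBinom_zero_right hq]

theorem qDiff_div_pow (hq : ∀ m : ℕ, 0 < m → q ^ m ≠ 1) (hq0 : q ≠ 0) (f : ℕ → F)
    (l t k : ℕ) :
    qDiff q t (fun p => qDiff q l f p / q ^ (l * p)) k =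
      qDiff q (l + t) f k / q ^ (l * (k + t)) := by
  induction t generalizing k with
  | zero => simp [qDiff_zero hq]
  | succ t ih =>
    rw [qDiff_succ hq, ih, ih, ← add_assoc, qDiff_succ hq]
    field_simp
    ring

theorem apply_add_eq_sum_qBinom_mul_qDiff (hq : ∀ m : ℕ, 0 < m → q ^ m ≠ 1) (f : ℕ → F)
    (k p : ℕ) : f (k + p) = ∑ i ∈ range (p + 1), qBinom q p i * qDiff q i f k := by
  induction p generalizing k with
  | zero => simp [qBinom_zero_right hq, qDiff_zero hq]
  | succ p ih =>
    have hshift (i : ℕ) : qBinom q p i * qDiff q i f (k + 1) =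
        qBinom q p i * qDiff q (i + 1) f k + q ^ i * qBinom q p i * qDiff q i f k := by
      rw [qDiff_succ hq]; ring
    have hreindex : ∑ i ∈ range (p + 1), q ^ i * qBinom q p i * qDiff q i f k =
        ∑ i ∈ range (p + 1), q ^ (i + 1) * qBinom q p (i + 1) * qDiff q (i + 1) f k +
          qDiff q 0 f k := by
      rw [sum_range_succ', sum_range_succ _ p, qBinom_of_lt (Nat.lt_succ_self p),
        qBinom_zero_right hq]
      ring
    rw [← add_assoc, add_right_comm, ih, sum_range_succ' _ (p + 1), qBinom_zero_right hq, one_mul,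
      sum_congr rfl fun i _ => hshift i, sum_add_distrib, hreindex, ← add_assoc,
      ← sum_add_distrib]
    congr 1
    refine sum_congr rfl fun i _ => ?_
    rw [qBinom_succ_succ' hq]
    ring

theorem qDiff_eq_sum_qBinom_mul_qDiff_add (hq : ∀ m : ℕ, 0 < m → q ^ m ≠ 1) (hq0 : q ≠ 0)
    (f : ℕ → F) (l k : ℕ) :
    qDiff q l f k =
      ∑ t ∈ range (k + 1), q ^ (l * (k - t)) * qBinom q k t * qDiff q (l + t) f 0 := by
  have h := apply_add_eq_sum_qBinom_mul_qDiff hq (fun p => qDiff q l f p / q ^ (l * p)) 0 k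
  simp only [zero_add, qDiff_div_pow hq hq0] at h
  rw [div_eq_iff (pow_ne_zero _ hq0), sum_mul] at h
  rw [h]
  refine sum_congr rfl fun t ht => ?_
  rw [Nat.mul_sub, pow_sub₀ _ hq0 (Nat.mul_le_mul_left l (Nat.lt_succ_iff.1 (mem_range.1 ht)))]
  ring

theorem sum_range_reverse_eq_qDiff (hq : ∀ m : ℕ, 0 < m → q ^ m ≠ 1) (hq0 : q ≠ 0)
    (f : ℕ → F) (k l : ℕ) :
    ∑ j ∈ range (l + 1), (-1 : F) ^ (l - j) *
        q ^ (((j + 1).choose 2 : ℤ) - (l : ℤ) * ((k : ℤ) + j)) * qBinom q l j * f (k + j) =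
      q ^ (-((l.choose 2 + l * k : ℕ) : ℤ)) * qDiff q l f k := by
  rw [qDiff, mul_sum, ← sum_range_reflect]
  refine sum_congr rfl fun j hj => ?_
  have hjl : j ≤ l := Nat.lt_succ_iff.1 (mem_range.1 hj)
  have hexp : ((l - j + 1).choose 2 : ℤ) - (l : ℤ) * ((k : ℤ) + ((l - j : ℕ) : ℤ)) =
      -((l.choose 2 + l * k : ℕ) : ℤ) + (j.choose 2 : ℕ) := by
    qify [hjl]
    push_cast [Nat.cast_choose_two, Nat.cast_sub hjl]
    ring
  rw [Nat.add_sub_cancel, Nat.sub_sub_self hjl, qBinom_symm hq hjl, hexp, zpow_add₀ hq0,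
    zpow_natCast]
  ring

theorem qStirling2_eq_qDiff (m n : ℕ) :
    qStirling2 q m n =
      q ^ (-(n.choose 2 : ℤ)) / qFact q n * qDiff q n (fun p => qInt q p ^ m) 0 := by
  rw [qStirling2, qDiff]
  congr 1
  refine sum_congr rfl fun i _ => ?_
  rw [zero_add]

end

theorem stmt18 {F : Type*} [Field F] (q : F) (hq0 : q ≠ 0)
    (hq : ∀ m : ℕ, 0 < m → q ^ m ≠ 1) (m k l : ℕ) :
    (1 / qFact q l) * ∑ j ∈ Finset.range (l + 1), (-1 : F) ^ (l - j) *
        q ^ (((j + 1).choose 2 : ℤ) - (l : ℤ) * ((k : ℤ) + j)) * qBinom q l j *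
        (qInt q (k + j)) ^ m =
    ∑ j ∈ Finset.range (k + 1), q ^ (j.choose 2) * qBinom q (l + j) j *
        (qFact q k / qFact q (k - j)) * qStirling2 q m (l + j) := by
  rw [sum_range_reverse_eq_qDiff hq hq0 (fun p => qInt q p ^ m),
    qDiff_eq_sum_qBinom_mul_qDiff_add hq hq0, mul_sum, mul_sum]
  refine sum_congr rfl fun t ht => ?_
  have htk : t ≤ k := Nat.lt_succ_iff.1 (mem_range.1 ht)
  have hexp : q ^ (-((l.choose 2 + l * k : ℕ) : ℤ)) * q ^ (l * (k - t)) =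
      q ^ t.choose 2 * q ^ (-((l + t).choose 2 : ℤ)) := by
    rw [← zpow_natCast, ← zpow_natCast, ← zpow_add₀ hq0, ← zpow_add₀ hq0]
    congr 1
    qify [htk]
    push_cast [Nat.cast_choose_two]
    ring
  rw [qStirling2_eq_qDiff, qBinom_eq_qFact hq htk, qBinom_eq_qFact hq (Nat.le_add_left t l),
    Nat.add_sub_cancel]
  calc _ = q ^ (-((l.choose 2 + l * k : ℕ) : ℤ)) * q ^ (l * (k - t)) *
        (qFact q k * qDiff q (l + t) (fun p => qInt q p ^ m) 0 /
          (qFact q l * qFact q t * qFact q (k - t))) := by ring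
    _ = _ := by rw [hexp]; field_simp [qFact_ne_zero hq]
end
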